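/- Let G be a group acting transitively on a finite set J with |J| even, and let σ be an involution of the set of G-orbits of (J × J)/∼ (unordered pairs, including the diagonal). Suppose each orbit S satisfies: |S| is divisible by |J| or |S| = s·|J|/2 with s odd. Then there exists at least one G-orbit S of the set of unordered pairs J × J/∼ such that σ(S) = S and |S| = s·|J|/2 for some odd integer s. -/

import Mathlib

instance sym2MulAction (G J : Type) [Group G] [MulAction G J] :
    MulAction G (Sym2 J) where
  smul g := Sym2.map (g • ·)
  one_smul x := by
    refine Sym2.ind (fun a b => ?_) x
    show Sym2.map _ _ = _
    simp
  mul_smul g h x := by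
    refine Sym2.ind (fun a b => ?_) x
    show Sym2.map _ _ = Sym2.map _ (Sym2.map _ _)
    simp [mul_smul]

/-!
Write `|J| = 2m`. There are `m(2m+1)` unordered pairs, and every orbit has size `m·t` with `t`
even unless the orbit has size `s·|J|/2` with `s` odd, in which case `t = s` is odd. Summing,
the `t`'s add up to the odd number `2m+1`, so there is an odd number of orbits of the second
kind. Since `σ` preserves orbit sizes it permutes these orbits, and an involution of a set of
odd cardinality has a fixed point.
-/

open MulAction

theorem Function.Involutive.exists_fixed_point_of_odd_card {α : Type*} [Fintype α]
    {f : α → α} (hf : Function.Involutive f) (hα : Odd (Fintype.card α)) : ∃ a, f a = a := by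
  have hsq : hf.toPerm ^ 2 ^ 1 = 1 := Equiv.ext hf
  exact Equiv.Perm.exists_fixed_point_of_prime (by have := Nat.odd_iff.mp hα; omega) hsq

theorem Function.Involutive.exists_fixed_point_of_odd_card_subtype {α : Type*} [Finite α]
    {f : α → α} (hf : Function.Involutive f) (p : α → Prop) (hp : ∀ a, p a → p (f a))
    (hodd : Odd (Nat.card {a // p a})) : ∃ a, p a ∧ f a = a := by
  have : Fintype {a // p a} := Fintype.ofFinite _
  have hf' : Function.Involutive (Subtype.map f hp) := fun a => Subtype.ext (hf a)
  obtain ⟨⟨a, ha⟩, hfix⟩ :=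
    hf'.exists_fixed_point_of_odd_card (Nat.card_eq_fintype_card (α := {a // p a}) ▸ hodd)
  exact ⟨a, ha, congrArg Subtype.val hfix⟩

namespace MulAction.orbitRel.Quotient

variable {G α : Type*} [Group G] [MulAction G α]

theorem card_orbit_eq_card_fiber (q : orbitRel.Quotient G α) :
    Nat.card q.orbit = Nat.card {y : α // Quotient.mk (orbitRel G α) y = q} :=
  Nat.card_congr (Equiv.subtypeEquivRight fun _ => mem_orbit)

theorem sum_card_orbit [Finite α] [Fintype (orbitRel.Quotient G α)] :
    ∑ q : orbitRel.Quotient G α, Nat.card q.orbit = Nat.card α := by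
  rw [Nat.card_congr (selfEquivSigmaOrbits' G α), Nat.card_sigma]

end MulAction.orbitRel.Quotient

def IsOddHalfMultiple (n c : ℕ) : Prop := ∃ s, Odd s ∧ 2 * c = s * n

theorem exists_eq_mul_odd_iff_isOddHalfMultiple {m c : ℕ}
    (h : 2 * m ∣ c ∨ IsOddHalfMultiple (2 * m) c) :
    ∃ t, c = m * t ∧ (Odd t ↔ IsOddHalfMultiple (2 * m) c) := by
  by_cases hc : IsOddHalfMultiple (2 * m) c
  · obtain ⟨s, hs, hcs⟩ := id hc
    exact ⟨s, by linarith, iff_of_true hs hc⟩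
  · obtain ⟨k, rfl⟩ := h.resolve_right hc
    exact ⟨2 * k, by ring, iff_of_false (by simp [parity_simps]) hc⟩

theorem odd_card_isOddHalfMultiple {ι : Type*} [Fintype ι] {m k : ℕ} (hm : 0 < m)
    (hk : Odd k) (c : ι → ℕ) (hc : ∀ i, 2 * m ∣ c i ∨ IsOddHalfMultiple (2 * m) (c i))
    (hsum : ∑ i, c i = m * k) : Odd (Nat.card {i // IsOddHalfMultiple (2 * m) (c i)}) := by
  classical
  choose t hct hodd using fun i => exists_eq_mul_odd_iff_isOddHalfMultiple (hc i)
  have hsum_t : ∑ i, t i = k := by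
    refine Nat.eq_of_mul_eq_mul_left hm ?_
    rw [Finset.mul_sum, ← hsum]
    exact Finset.sum_congr rfl fun i _ => (hct i).symm
  rw [← hsum_t, Finset.odd_sum_iff_odd_card_odd] at hk
  rw [Nat.card_eq_fintype_card, Fintype.card_subtype]
  simpa only [hodd] using hk

theorem Sym2.card_of_card_eq_two_mul {α : Type*} [Fintype α] {m : ℕ}
    (h : Fintype.card α = 2 * m) : Fintype.card (Sym2 α) = m * (2 * m + 1) := by
  rw [Sym2.card, h, Nat.choose_two_right, Nat.add_sub_cancel,
    show (2 * m + 1) * (2 * m) = 2 * (m * (2 * m + 1)) by ring, Nat.mul_div_cancel_left _ two_pos]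

theorem stmt5_general (G J : Type) [Group G] [Fintype J] [Nonempty J]
    [MulAction G J]
    (heven : Even (Fintype.card J))
    (σ : Quotient (MulAction.orbitRel G (Sym2 J)) ≃
        Quotient (MulAction.orbitRel G (Sym2 J)))
    (hinv : ∀ q, σ (σ q) = q)
    (hcard : ∀ x : Sym2 J,
      Nat.card {y : Sym2 J //
          Quotient.mk (MulAction.orbitRel G (Sym2 J)) y
            = σ (Quotient.mk (MulAction.orbitRel G (Sym2 J)) x)}
        = Nat.card (MulAction.orbit G x))
    (horb : ∀ x : Sym2 J,
      (Fintype.card J ∣ Nat.card (MulAction.orbit G x)) ∨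
      ∃ s : ℕ, Odd s ∧ 2 * Nat.card (MulAction.orbit G x) = s * Fintype.card J) :
    ∃ x : Sym2 J,
      σ (Quotient.mk (MulAction.orbitRel G (Sym2 J)) x)
        = Quotient.mk (MulAction.orbitRel G (Sym2 J)) x ∧
      ∃ s : ℕ, Odd s ∧ 2 * Nat.card (MulAction.orbit G x) = s * Fintype.card J := by
  classical
  obtain ⟨m, hm⟩ := heven.two_dvd
  have hm_pos : 0 < m := by
    have := Fintype.card_pos (α := J)
    omega
  let c : orbitRel.Quotient G (Sym2 J) → ℕ := fun q => Nat.card q.orbit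
  have hσc : ∀ q, c (σ q) = c q := Quotient.ind fun x =>
    (orbitRel.Quotient.card_orbit_eq_card_fiber _).trans (hcard x)
  have hsum : ∑ q, c q = m * (2 * m + 1) := by
    rw [orbitRel.Quotient.sum_card_orbit, Nat.card_eq_fintype_card,
      Sym2.card_of_card_eq_two_mul hm]
  have hodd : Odd (Nat.card {q // IsOddHalfMultiple (2 * m) (c q)}) :=
    odd_card_isOddHalfMultiple hm_pos (odd_two_mul_add_one m) c
      (Quotient.ind fun x => hm ▸ horb x) hsum
  obtain ⟨q, hq, hfix⟩ := Function.Involutive.exists_fixed_point_of_odd_card_subtype hinv _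
    (fun q hq => (hσc q).symm ▸ hq) hodd
  induction q using Quotient.ind with | _ x => exact ⟨x, hfix, hm ▸ hq⟩

/-- Let `G` act transitively on a finite (nonempty) set `J` with `|J|` even, and
let `σ` be an involution of the set of `G`-orbits of the set `(J × J)/∼` of
unordered pairs (diagonal included) preserving the cardinality of orbits.
If every orbit `S` satisfies `|J| ∣ |S|` or `|S| = s·|J|/2` with `s` odd, then
there is an orbit `S` with `σ(S) = S` and `|S| = s·|J|/2` for some odd `s`. -/
theorem stmt5 (G J : Type) [Group G] [Fintype J] [Nonempty J]
    [MulAction G J] [MulAction.IsPretransitive G J]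
    (heven : Even (Fintype.card J))
    (σ : Quotient (MulAction.orbitRel G (Sym2 J)) ≃
        Quotient (MulAction.orbitRel G (Sym2 J)))
    (hinv : ∀ q, σ (σ q) = q)
    (hcard : ∀ x : Sym2 J,
      Nat.card {y : Sym2 J //
          Quotient.mk (MulAction.orbitRel G (Sym2 J)) y
            = σ (Quotient.mk (MulAction.orbitRel G (Sym2 J)) x)}
        = Nat.card (MulAction.orbit G x))
    (horb : ∀ x : Sym2 J,
      (Fintype.card J ∣ Nat.card (MulAction.orbit G x)) ∨
      ∃ s : ℕ, Odd s ∧ 2 * Nat.card (MulAction.orbit G x) = s * Fintype.card J) :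
    ∃ x : Sym2 J,
      σ (Quotient.mk (MulAction.orbitRel G (Sym2 J)) x)
        = Quotient.mk (MulAction.orbitRel G (Sym2 J)) x ∧
      ∃ s : ℕ, Odd s ∧ 2 * Nat.card (MulAction.orbit G x) = s * Fintype.card J :=
  stmt5_general G J heven σ hinv hcard horb
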